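/- Let Σ = BΩBᵀ + Δ as above, w the long-only minimum variance portfolio, K = {i : w_i > 0}, and h = Ω(B^K)ᵀ(Σ^K)⁻¹1_k. Then for every i ∉ K, B_i · h ≥ 1. Combined with the previous statement: w_i > 0 if and only if B_i · h < 1 (hyperplane separation). -/

import Mathlib

/-!
Moving mass `t` from a support coordinate `j` to any coordinate `i` stays in the simplex for
small `t`, so minimality forces `(Σw)_j ≤ (Σw)_i`: the minimiser equalises `(Σw)_i` to
`μ = wᵀΣw` on its support `K` and has `(Σw)_i ≥ μ` off it (the KKT conditions, `ν = -2μ`).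
On `K` this reads `Σ^K w^K = μ 1`, hence `μ h = Ω Bᵀ w`, and the factor form of `Σ` gives
`μ (B_i ⬝ h) + δ_i² w_i = (Σw)_i` for every `i`. Comparing with `μ > 0` yields `B_i ⬝ h ≥ 1`
off `K` and `B_i ⬝ h < 1` on `K`.
-/

open Matrix

lemma nonneg_of_forall_mul_add_sq_mul_nonneg {a b ε : ℝ} (hε : 0 < ε)
    (h : ∀ t, 0 < t → t ≤ ε → 0 ≤ t * a + t ^ 2 * b) : 0 ≤ a := by
  by_contra! ha
  set t := min ε (-a / (|b| + 1))
  have ht : 0 < t := lt_min hε (div_pos (neg_pos.mpr ha) (by positivity))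
  have htb : t * (|b| + 1) ≤ -a := (le_div_iff₀ (by positivity)).mp (min_le_right _ _)
  have := h t ht (min_le_left _ _)
  nlinarith [mul_le_mul_of_nonneg_left (le_abs_self b) ht.le]

lemma add_smul_single_sub_single_mem_stdSimplex {ι : Type*} [Fintype ι] [DecidableEq ι]
    {w : ι → ℝ} (hw : w ∈ stdSimplex ℝ ι) (i : ι) {j : ι} {t : ℝ} (ht : 0 ≤ t) (htj : t ≤ w j) :
    w + t • (Pi.single i 1 - Pi.single j 1) ∈ stdSimplex ℝ ι := by
  refine ⟨fun k => ?_, ?_⟩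
  · have := hw.1 k
    have hi : (0 : ℝ) ≤ (Pi.single i 1 : ι → ℝ) k := by
      rw [Pi.single_apply]; split_ifs <;> norm_num
    rcases eq_or_ne k j with rfl | hkj
    · simp only [Pi.add_apply, Pi.smul_apply, Pi.sub_apply, Pi.single_eq_same, smul_eq_mul]
      nlinarith
    · simp only [Pi.add_apply, Pi.smul_apply, Pi.sub_apply, Pi.single_eq_of_ne hkj, sub_zero,
        smul_eq_mul]
      nlinarith
  · simp [Finset.sum_add_distrib, ← Finset.mul_sum, Finset.sum_sub_distrib, hw.2]

namespace Matrix

lemma submatrix_val_mulVec_of_forall_notMem_eq_zero {R l m n : Type*} [CommSemiring R]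
    [Fintype n] (A : Matrix m n R) (e : l → m) {K : Finset n} {v : n → R}
    (hv : ∀ j ∉ K, v j = 0) :
    A.submatrix e ((↑) : K → n) *ᵥ (fun k => v k) = fun i => (A *ᵥ v) (e i) := by
  funext i
  simp only [mulVec, dotProduct, submatrix_apply]
  rw [Finset.sum_coe_sort K (fun j => A (e i) j * v j)]
  exact Finset.sum_subset (Finset.subset_univ K) fun j _ hj => by simp [hv j hj]

lemma mul_mul_transpose_add_diagonal_mulVec_apply {R m n : Type*} [CommSemiring R] [Fintype m]
    [Fintype n] [DecidableEq m] (B : Matrix m n R) (Ω : Matrix n n R) (d w : m → R) (i : m) :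
    ((B * Ω * Bᵀ + diagonal d) *ᵥ w) i = B i ⬝ᵥ (Ω *ᵥ (Bᵀ *ᵥ w)) + d i * w i := by
  rw [add_mulVec, Pi.add_apply, mulVec_diagonal, ← mulVec_mulVec, ← mulVec_mulVec]
  rfl

section QuadraticForm

variable {ι : Type*} [Fintype ι] {S : Matrix ι ι ℝ}

lemma IsSymm.dotProduct_mulVec_add_smul (hS : S.IsSymm) (w d : ι → ℝ) (t : ℝ) :
    (w + t • d) ⬝ᵥ S *ᵥ (w + t • d) =
      w ⬝ᵥ S *ᵥ w + t * (2 * (d ⬝ᵥ S *ᵥ w)) + t ^ 2 * (d ⬝ᵥ S *ᵥ d) := by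
  have hsymm : w ⬝ᵥ S *ᵥ d = d ⬝ᵥ S *ᵥ w := by
    rw [dotProduct_mulVec, ← mulVec_transpose, hS.eq, dotProduct_comm]
  simp only [mulVec_add, mulVec_smul, add_dotProduct, dotProduct_add, smul_dotProduct,
    dotProduct_smul, smul_eq_mul, hsymm]
  ring

variable {w : ι → ℝ}

theorem IsSymm.mulVec_le_of_isMinOn_stdSimplex [DecidableEq ι] (hS : S.IsSymm)
    (hmin : IsMinOn (fun v => v ⬝ᵥ S *ᵥ v) (stdSimplex ℝ ι) w) (hw : w ∈ stdSimplex ℝ ι)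
    {j : ι} (hj : 0 < w j) (i : ι) : (S *ᵥ w) j ≤ (S *ᵥ w) i := by
  set d : ι → ℝ := Pi.single i 1 - Pi.single j 1
  have hd : d ⬝ᵥ S *ᵥ w = (S *ᵥ w) i - (S *ᵥ w) j := by
    simp [d, sub_dotProduct]
  suffices 0 ≤ 2 * (d ⬝ᵥ S *ᵥ w) by linarith
  refine nonneg_of_forall_mul_add_sq_mul_nonneg (b := d ⬝ᵥ S *ᵥ d) hj fun t ht htj => ?_
  have := isMinOn_iff.mp hmin _ (add_smul_single_sub_single_mem_stdSimplex hw i ht.le htj)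
  rw [hS.dotProduct_mulVec_add_smul] at this
  linarith

theorem IsSymm.mulVec_eq_of_isMinOn_stdSimplex [DecidableEq ι] (hS : S.IsSymm)
    (hmin : IsMinOn (fun v => v ⬝ᵥ S *ᵥ v) (stdSimplex ℝ ι) w) (hw : w ∈ stdSimplex ℝ ι)
    {j : ι} (hj : 0 < w j) : (S *ᵥ w) j = w ⬝ᵥ S *ᵥ w := by
  have hterm : ∀ k, w k * (S *ᵥ w) k = w k * (S *ᵥ w) j := fun k => by
    rcases (hw.1 k).eq_or_lt with hk | hk
    · rw [← hk, zero_mul, zero_mul]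
    · rw [le_antisymm (hS.mulVec_le_of_isMinOn_stdSimplex hmin hw hk j)
        (hS.mulVec_le_of_isMinOn_stdSimplex hmin hw hj k)]
  calc (S *ᵥ w) j = (∑ k, w k) * (S *ᵥ w) j := by rw [hw.2, one_mul]
    _ = w ⬝ᵥ S *ᵥ w := by simp only [dotProduct, hterm, Finset.sum_mul]

theorem IsSymm.dotProduct_mulVec_le_of_isMinOn_stdSimplex [DecidableEq ι] (hS : S.IsSymm)
    (hmin : IsMinOn (fun v => v ⬝ᵥ S *ᵥ v) (stdSimplex ℝ ι) w) (hw : w ∈ stdSimplex ℝ ι)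
    (i : ι) : w ⬝ᵥ S *ᵥ w ≤ (S *ᵥ w) i := by
  obtain ⟨j, -, hj⟩ : ∃ j ∈ Finset.univ, (0 : ι → ℝ) j < w j :=
    Finset.exists_lt_of_sum_lt (by simp [hw.2])
  rw [← hS.mulVec_eq_of_isMinOn_stdSimplex hmin hw hj]
  exact hS.mulVec_le_of_isMinOn_stdSimplex hmin hw hj i

end QuadraticForm

end Matrix

theorem stmt14 {p q : ℕ} (B : Matrix (Fin p) (Fin q) ℝ)
    (Ω : Matrix (Fin q) (Fin q) ℝ) (hΩ : Ω.PosDef)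
    (δ : Fin p → ℝ) (hδ : ∀ i, 0 < δ i)
    (S : Matrix (Fin p) (Fin p) ℝ)
    (hSdef : S = B * Ω * Bᵀ + Matrix.diagonal (fun i => (δ i) ^ 2))
    (w : Fin p → ℝ) (hwsum : ∑ i, w i = 1) (hnn : ∀ i, 0 ≤ w i)
    (hmin : ∀ v : Fin p → ℝ, (∑ i, v i = 1) → (∀ i, 0 ≤ v i) →
      w ⬝ᵥ S *ᵥ w ≤ v ⬝ᵥ S *ᵥ v) :
    let K : Finset (Fin p) := Finset.univ.filter (fun i => 0 < w i)
    let SK : Matrix K K ℝ := S.submatrix (Subtype.val : K → Fin p) Subtype.val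
    let BK : Matrix K (Fin q) ℝ := B.submatrix (Subtype.val : K → Fin p) id
    let h : Fin q → ℝ := Ω *ᵥ (BKᵀ *ᵥ (SK⁻¹ *ᵥ 1))
    (∀ i : Fin p, i ∉ K → 1 ≤ (fun j => B i j) ⬝ᵥ h) ∧
    (∀ i : Fin p, 0 < w i ↔ (fun j => B i j) ⬝ᵥ h < 1) := by
  intro K SK BK h
  have hSpd : S.PosDef := hSdef ▸ PosDef.posSemidef_add
    (hΩ.posSemidef.mul_mul_conjTranspose_same B) (.diagonal fun i => pow_pos (hδ i) 2)
  have hS : S.IsSymm := hSpd.isHermitian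
  have hw : w ∈ stdSimplex ℝ (Fin p) := ⟨hnn, hwsum⟩
  have hminOn : IsMinOn (fun v => v ⬝ᵥ S *ᵥ v) (stdSimplex ℝ (Fin p)) w :=
    isMinOn_iff.mpr fun v hv => hmin v hv.2 hv.1
  set μ := w ⬝ᵥ S *ᵥ w
  have hμ : 0 < μ := hSpd.dotProduct_mulVec_pos fun h0 => by simp [h0] at hwsum
  have hoff : ∀ i ∉ K, w i = 0 := fun i hi =>
    ((hnn i).eq_or_lt.resolve_right (by simpa [K] using hi)).symm
  have hSK : SK *ᵥ (fun k => w k) = μ • 1 := by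
    rw [submatrix_val_mulVec_of_forall_notMem_eq_zero S _ hoff]
    funext k
    simpa using hS.mulVec_eq_of_isMinOn_stdSimplex hminOn hw (Finset.mem_filter.mp k.2).2
  have hμh : μ • h = Ω *ᵥ (Bᵀ *ᵥ w) := by
    have : Invertible SK := (hSpd.submatrix Subtype.val_injective).isUnit.invertible
    rw [← mulVec_smul, ← mulVec_smul, ← mulVec_smul, inv_mulVec_eq_vec hSK.symm,
      transpose_submatrix, submatrix_val_mulVec_of_forall_notMem_eq_zero _ _ hoff]
    rfl
  have hkey : ∀ i, μ * (B i ⬝ᵥ h) + δ i ^ 2 * w i = (S *ᵥ w) i := fun i => by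
    rw [hSdef, mul_mul_transpose_add_diagonal_mulVec_apply, ← hμh, dotProduct_smul, smul_eq_mul]
  have hout : ∀ i ∉ K, 1 ≤ B i ⬝ᵥ h := fun i hi => by
    have := hS.dotProduct_mulVec_le_of_isMinOn_stdSimplex hminOn hw i
    rw [← hkey, hoff i hi] at this
    nlinarith
  refine ⟨hout, fun i => ⟨fun hi => ?_, fun hi => ?_⟩⟩
  · have := hkey i
    rw [hS.mulVec_eq_of_isMinOn_stdSimplex hminOn hw hi] at this
    nlinarith [pow_pos (hδ i) 2]
  · by_contra hi'
    exact (hout i (by simpa [K] using hi')).not_gt hi
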